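/- Let φ be a 3-CNF formula with clauses c_1, ..., c_m over variables x_1, ..., x_n, and let G_φ be the graph with vertex set {c_1, ..., c_m} ∪ {x_i, x̄_i : i ∈ [n]} ∪ {s, t} and edge set {c_i c_j : 1 ≤ i < j ≤ m} ∪ {t x_i, t x̄_i : i ∈ [n]} ∪ {x_i c_j : the literal x_i occurs in clause c_j} ∪ {x̄_i c_j : the literal x̄_i occurs in clause c_j} ∪ {s t}. If a coloring c of V(G_φ) with two colors makes G_φ rainbow vertex-connected, then for every clause c_i there is a literal ℓ occurring in c_i such that c(ℓ) ≠ c(t); in particular every rainbow path from s to c_i has the form s, t, ℓ, c_i for some literal ℓ occurring in c_i. -/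

import Mathlib

open SimpleGraph

/-- A walk is a rainbow path if it is a path and its internal vertices
(the support without the first and last vertex) receive pairwise distinct colors. -/
def IsRainbowPath {V α : Type*} (G : SimpleGraph V) (c : V → α) {u v : V}
    (p : G.Walk u v) : Prop :=
  p.IsPath ∧ (p.support.tail.dropLast.map c).Nodup

/-- A vertex coloring makes a graph rainbow vertex-connected if every two distinct
vertices are joined by a rainbow path. -/
def RainbowVertexConnected {V α : Type*} (G : SimpleGraph V) (c : V → α) : Prop :=
  ∀ u v : V, u ≠ v → ∃ p : G.Walk u v, IsRainbowPath G c p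

namespace SatGraph

variable {m n : ℕ}

/-- Vertices of `G_φ`: the clause vertices `c_i = Sum.inl i`, the literal vertices
`x_j = Sum.inr (Sum.inl (j, true))` and `x̄_j = Sum.inr (Sum.inl (j, false))`, and
`s = Sum.inr (Sum.inr true)`, `t = Sum.inr (Sum.inr false)`. -/
def Vert (m n : ℕ) : Type := Fin m ⊕ ((Fin n × Bool) ⊕ Bool)

/-- The adjacency generating relation of `G_φ`: the clause vertices form a clique, `t` is
joined to every literal vertex, each literal is joined to the clauses in which it occurs,
and `s` is joined to `t`. -/
def rel (φ : Fin m → Finset (Fin n × Bool)) : Vert m n → Vert m n → Prop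
  | Sum.inl _, Sum.inl _ => True
  | Sum.inr (Sum.inr false), Sum.inr (Sum.inl _) => True
  | Sum.inr (Sum.inl l), Sum.inl i => l ∈ φ i
  | Sum.inr (Sum.inr true), Sum.inr (Sum.inr false) => True
  | _, _ => False

/-- The graph `G_φ`. -/
def graph (φ : Fin m → Finset (Fin n × Bool)) : SimpleGraph (Vert m n) :=
  SimpleGraph.fromRel (rel φ)

end SatGraph

/-!
With two colors a rainbow path has at most two internal vertices, so a rainbow path from `s`
to a clause vertex `c_i` is a walk of length at most three. Since `t` is the only neighbour of
`s` and the neighbours of `t` are `s` and the literals, the only such walks are `s, t, ℓ, c_i`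
with `ℓ ∈ c_i`; rainbowness then forces `c(ℓ) ≠ c(t)`, and such a path exists by rainbow
connectivity.
-/

theorem IsRainbowPath.length_le_card_add_one {V α : Type*} [Fintype α] {G : SimpleGraph V}
    {c : V → α} {u v : V} {p : G.Walk u v} (hp : IsRainbowPath G c p) :
    p.length ≤ Fintype.card α + 1 := by
  have := hp.2.length_le_card
  rw [List.length_map, List.length_dropLast, List.length_tail, p.length_support] at this
  omega

namespace SatGraph

variable {m n : ℕ} {φ : Fin m → Finset (Fin n × Bool)}

abbrev s : Vert m n := Sum.inr (Sum.inr true)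

abbrev t : Vert m n := Sum.inr (Sum.inr false)

abbrev lit (l : Fin n × Bool) : Vert m n := Sum.inr (Sum.inl l)

abbrev clause (i : Fin m) : Vert m n := Sum.inl i

theorem eq_t_of_adj_s {v : Vert m n} (h : (graph φ).Adj s v) : v = t := by
  obtain ⟨-, h | h⟩ := h <;> rcases v with _ | _ | (_ | _) <;> first | rfl | simp_all [rel]

theorem eq_s_or_lit_of_adj_t {v : Vert m n} (h : (graph φ).Adj t v) :
    v = s ∨ ∃ l, v = lit l := by
  obtain ⟨-, h | h⟩ := h <;> rcases v with _ | l | (_ | _) <;>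
    first | exact Or.inr ⟨l, rfl⟩ | exact Or.inl rfl | simp_all [rel]

theorem eq_t_or_clause_of_adj_lit {l : Fin n × Bool} {v : Vert m n}
    (h : (graph φ).Adj (lit l) v) : v = t ∨ ∃ j, v = clause j ∧ l ∈ φ j := by
  obtain ⟨-, h | h⟩ := h <;> rcases v with j | _ | (_ | _) <;> simp only [rel] at h <;>
    first | exact Or.inr ⟨j, rfl, h⟩ | exact Or.inl rfl

theorem support_eq_of_walk_lit_clause {l : Fin n × Bool} {i : Fin m}
    (p : (graph φ).Walk (lit l) (clause i)) (hp : p.length ≤ 1) :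
    l ∈ φ i ∧ p.support = [lit l, clause i] := by
  cases p with
  | cons h q =>
    rcases eq_t_or_clause_of_adj_lit h with rfl | ⟨j, rfl, hl⟩
    · cases q with
      | cons _ _ => simp at hp
    · cases q with
      | nil => exact ⟨hl, rfl⟩
      | cons _ _ => simp at hp

theorem support_eq_of_walk_t_clause {i : Fin m} (p : (graph φ).Walk t (clause i))
    (hp : p.length ≤ 2) : ∃ l ∈ φ i, p.support = [t, lit l, clause i] := by
  cases p with
  | cons h q =>
    rcases eq_s_or_lit_of_adj_t h with rfl | ⟨l, rfl⟩
    · cases q with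
      | cons h' q =>
        obtain rfl := eq_t_of_adj_s h'
        cases q with
        | cons _ _ => simp at hp
    · obtain ⟨hl, hq⟩ :=
        support_eq_of_walk_lit_clause q (by rw [Walk.length_cons] at hp; omega)
      exact ⟨l, hl, by rw [Walk.support_cons, hq]⟩

theorem support_eq_of_walk_s_clause {i : Fin m} (p : (graph φ).Walk s (clause i))
    (hp : p.length ≤ 3) : ∃ l ∈ φ i, p.support = [s, t, lit l, clause i] := by
  cases p with
  | cons h q =>
    obtain rfl := eq_t_of_adj_s h
    obtain ⟨l, hl, hq⟩ := support_eq_of_walk_t_clause q (by rw [Walk.length_cons] at hp; omega)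
    exact ⟨l, hl, by rw [Walk.support_cons, hq]⟩

end SatGraph

open SatGraph in
theorem clause_has_literal_colored_ne_t_general {m n : ℕ} (φ : Fin m → Finset (Fin n × Bool))
    (c : Vert m n → Fin 2)
    (hc : RainbowVertexConnected (graph φ) c) :
    ∀ i : Fin m,
      (∃ l ∈ φ i, c (Sum.inr (Sum.inl l)) ≠ c (Sum.inr (Sum.inr false))) ∧
      ∀ p : (graph φ).Walk (Sum.inr (Sum.inr true)) (Sum.inl i),
        IsRainbowPath (graph φ) c p →
          ∃ l ∈ φ i, p.support =
            [Sum.inr (Sum.inr true), Sum.inr (Sum.inr false),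
              Sum.inr (Sum.inl l), Sum.inl i] := by
  intro i
  have rainbow_support (p : (graph φ).Walk s (clause i)) (hp : IsRainbowPath (graph φ) c p) :
      ∃ l ∈ φ i, p.support = [s, t, lit l, clause i] :=
    support_eq_of_walk_s_clause p (by simpa using hp.length_le_card_add_one)
  refine ⟨?_, rainbow_support⟩
  obtain ⟨p, hp⟩ := hc s (clause i) Sum.inr_ne_inl
  obtain ⟨l, hl, hsupp⟩ := rainbow_support p hp
  have hcolors := hp.2
  rw [hsupp] at hcolors
  exact ⟨l, hl, fun h => by simp [h] at hcolors⟩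

open SatGraph in
/-- if a two-coloring `c` makes `G_φ` rainbow vertex-connected, then every
clause `c_i` contains a literal `ℓ` with `c(ℓ) ≠ c(t)`; in particular every rainbow path
from `s` to `c_i` has support `[s, t, ℓ, c_i]` for some literal `ℓ` occurring in `c_i`. -/
theorem clause_has_literal_colored_ne_t {m n : ℕ} (φ : Fin m → Finset (Fin n × Bool))
    (h3 : ∀ i, (φ i).card ≤ 3) (c : Vert m n → Fin 2)
    (hc : RainbowVertexConnected (graph φ) c) :
    ∀ i : Fin m,
      (∃ l ∈ φ i, c (Sum.inr (Sum.inl l)) ≠ c (Sum.inr (Sum.inr false))) ∧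
      ∀ p : (graph φ).Walk (Sum.inr (Sum.inr true)) (Sum.inl i),
        IsRainbowPath (graph φ) c p →
          ∃ l ∈ φ i, p.support =
            [Sum.inr (Sum.inr true), Sum.inr (Sum.inr false),
              Sum.inr (Sum.inl l), Sum.inl i] :=
  clause_has_literal_colored_ne_t_general φ c hc
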